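/- There exists a constant C > 0, depending only on H, such that for all 0 ≤ s ≤ t ≤ 1, ∫₀¹ |t−r|^{H−1/2} (|t−r|^{H−1/2} − |s−r|^{H−1/2}) dr ≤ C (t−s)^{2H}. -/

import Mathlib

open MeasureTheory intervalIntegral

lemma aux_abs_rpow_II {β : ℝ} (hβ : -1 < β) (a b : ℝ) :
    IntervalIntegrable (fun x => |x| ^ β) MeasureTheory.volume a b := by
  have key : ∀ c : ℝ, 0 ≤ c →
      IntervalIntegrable (fun x => |x| ^ β) MeasureTheory.volume 0 c := by
    intro c hc
    apply (intervalIntegrable_rpow' hβ (a := 0) (b := c)).congr_ae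
    rw [Set.uIoc_of_le hc]
    filter_upwards [MeasureTheory.ae_restrict_mem measurableSet_Ioc] with x hx
    rw [abs_of_pos hx.1]
  have key2 : ∀ c : ℝ, IntervalIntegrable (fun x => |x| ^ β) MeasureTheory.volume 0 c := by
    intro c
    rcases le_total 0 c with hc | hc
    · exact key c hc
    · have := (IntervalIntegrable.iff_comp_neg (by simp)).mp (key (-c) (by linarith))
      simpa using this
  exact (key2 a).symm.trans (key2 b)

lemma aux_abs_sub_rpow_II {β : ℝ} (hβ : -1 < β) (c a b : ℝ) :
    IntervalIntegrable (fun r => |c - r| ^ β) MeasureTheory.volume a b := by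
  have := (aux_abs_rpow_II hβ (c - a) (c - b)).comp_sub_left c
  simpa using this

lemma aux_sub_rpow_II {β : ℝ} (hβ : -1 < β) (c a b : ℝ) :
    IntervalIntegrable (fun r => (r - c) ^ β) MeasureTheory.volume a b := by
  have := (intervalIntegrable_rpow' hβ (a := a - c) (b := b - c)).comp_sub_right c
  simpa using this

lemma aux_eval_sub_right {β : ℝ} (hβ : -1 < β) (c a b : ℝ) :
    ∫ r in a..b, (r - c) ^ β = ((b - c) ^ (β+1) - (a - c) ^ (β+1)) / (β+1) := by
  rw [intervalIntegral.integral_comp_sub_right (fun x => x ^ β) c,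
    integral_rpow (Or.inl hβ)]

lemma aux_eval_sub_left {β : ℝ} (hβ : -1 < β) (c a b : ℝ) :
    ∫ r in a..b, (c - r) ^ β = ((c - a) ^ (β+1) - (c - b) ^ (β+1)) / (β+1) := by
  rw [intervalIntegral.integral_comp_sub_left (fun x => x ^ β) c,
    integral_rpow (Or.inl hβ)]

/-- for `0 ≤ s ≤ t ≤ 1`,
`∫₀¹ |t-r|^(H-1/2) (|t-r|^(H-1/2) - |s-r|^(H-1/2)) dr ≤ C (t-s)^(2H)`. -/
theorem symmetrized_kernel_covariance_increment_bound (H : ℝ) (hH0 : 0 < H) (hH1 : H < 1/2) :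
    ∃ C > 0, ∀ s t : ℝ, 0 ≤ s → s ≤ t → t ≤ 1 →
      (∫ r in (0 : ℝ)..1,
          |t - r| ^ (H - 1/2) * (|t - r| ^ (H - 1/2) - |s - r| ^ (H - 1/2)))
        ≤ C * (t - s) ^ (2 * H) := by
  have hβ : (-1 : ℝ) < 2*H - 1 := by linarith
  have h2H : (0:ℝ) < 2*H := by linarith
  refine ⟨1/H, by positivity, ?_⟩
  intro s t hs hst ht1
  have hRHS : (0:ℝ) ≤ 1/H * (t - s) ^ (2*H) :=
    mul_nonneg (by positivity) (Real.rpow_nonneg (by linarith) _)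
  by_cases hf : IntervalIntegrable
      (fun r => |t - r| ^ (H - 1/2) * (|t - r| ^ (H - 1/2) - |s - r| ^ (H - 1/2)))
      MeasureTheory.volume 0 1
  swap
  · rw [intervalIntegral.integral_undef hf]; exact hRHS
  set m : ℝ := (s + t) / 2 with hm
  have hm0 : 0 ≤ m := by rw [hm]; linarith
  have hm1 : m ≤ 1 := by rw [hm]; linarith
  have hsm : s ≤ m := by rw [hm]; linarith
  have hmt : m ≤ t := by rw [hm]; linarith
  -- a.e. avoid s and t
  have hae_ne : ∀ᵐ r : ℝ ∂MeasureTheory.volume, r ≠ s ∧ r ≠ t := by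
    have h1 : ∀ᵐ r : ℝ ∂MeasureTheory.volume, r ≠ s := by
      simpa [MeasureTheory.ae_iff] using Real.volume_singleton (a := s)
    have h2 : ∀ᵐ r : ℝ ∂MeasureTheory.volume, r ≠ t := by
      simpa [MeasureTheory.ae_iff] using Real.volume_singleton (a := t)
    exact h1.and h2
  -- integrability on subintervals
  have hsub1 : Set.uIcc (0:ℝ) m ⊆ Set.uIcc (0:ℝ) 1 := by
    rw [Set.uIcc_of_le hm0, Set.uIcc_of_le (by norm_num : (0:ℝ) ≤ 1)]
    exact Set.Icc_subset_Icc le_rfl hm1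
  have hsub2 : Set.uIcc m 1 ⊆ Set.uIcc (0:ℝ) 1 := by
    rw [Set.uIcc_of_le hm1, Set.uIcc_of_le (by norm_num : (0:ℝ) ≤ 1)]
    exact Set.Icc_subset_Icc hm0 le_rfl
  have hf1 := hf.mono_set hsub1
  have hf2 := hf.mono_set hsub2
  -- the dominating function on [m,1]
  set g : ℝ → ℝ := fun r => |t - r| ^ (2*H - 1) - (r - s) ^ (2*H - 1) with hg
  have hgInt : IntervalIntegrable g MeasureTheory.volume m 1 :=
    (aux_abs_sub_rpow_II hβ t m 1).sub (aux_sub_rpow_II hβ s m 1)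
  -- first piece is ≤ 0
  have hpiece1 : (∫ r in (0:ℝ)..m,
      |t - r| ^ (H - 1/2) * (|t - r| ^ (H - 1/2) - |s - r| ^ (H - 1/2))) ≤ 0 := by
    have := intervalIntegral.integral_mono_ae_restrict (μ := MeasureTheory.volume)
      hm0 hf1 (_root_.intervalIntegrable_const (c := (0:ℝ))) ?_ 
    · simpa using this
    · filter_upwards [MeasureTheory.ae_restrict_mem measurableSet_Icc,
        MeasureTheory.ae_restrict_of_ae hae_ne] with r hr hne
      obtain ⟨hrs, hrt⟩ := hne
      have hr2 : r ≤ m := hr.2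
      have hrt' : r < t := lt_of_le_of_ne (by linarith) hrt
      have hsr : 0 < |s - r| := abs_pos.mpr (sub_ne_zero.mpr (Ne.symm hrs))
      have hle : |s - r| ≤ |t - r| := by
        rw [abs_of_pos (by linarith : (0:ℝ) < t - r)]
        exact abs_le.mpr ⟨by simp only [hm] at hr2; linarith, by linarith⟩
      have key : |t - r| ^ (H - 1/2) ≤ |s - r| ^ (H - 1/2) :=
        Real.rpow_le_rpow_of_nonpos hsr hle (by linarith)
      have ha : (0:ℝ) ≤ |t - r| ^ (H - 1/2) := Real.rpow_nonneg (abs_nonneg _) _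
      nlinarith
  -- second piece ≤ ∫ g
  have hpiece2 : (∫ r in m..(1:ℝ),
      |t - r| ^ (H - 1/2) * (|t - r| ^ (H - 1/2) - |s - r| ^ (H - 1/2)))
      ≤ ∫ r in m..(1:ℝ), g r := by
    apply intervalIntegral.integral_mono_ae_restrict hm1 hf2 hgInt
    filter_upwards [MeasureTheory.ae_restrict_mem measurableSet_Icc,
      MeasureTheory.ae_restrict_of_ae hae_ne] with r hr hne
    obtain ⟨hrs, hrt⟩ := hne
    have hr1 : m ≤ r := hr.1
    have hsr : s < r := lt_of_le_of_ne (by linarith) (Ne.symm hrs)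
    have htr : 0 < |t - r| := abs_pos.mpr (sub_ne_zero.mpr (Ne.symm hrt))
    have hle : |t - r| ≤ r - s := by
      refine abs_le.mpr ⟨by linarith, ?_⟩
      simp only [hm] at hr1; linarith
    have key : (r - s) ^ (H - 1/2) ≤ |t - r| ^ (H - 1/2) :=
      Real.rpow_le_rpow_of_nonpos htr hle (by linarith)
    have habs : |s - r| = r - s := by
      rw [abs_sub_comm]; exact abs_of_pos (by linarith)
    have haa : |t - r| ^ (H - 1/2) * |t - r| ^ (H - 1/2) = |t - r| ^ (2*H - 1) := by
      rw [← Real.rpow_add htr]; congr 1; ring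
    have hbb : (r - s) ^ (H - 1/2) * (r - s) ^ (H - 1/2) = (r - s) ^ (2*H - 1) := by
      rw [← Real.rpow_add (by linarith : (0:ℝ) < r - s)]; congr 1; ring
    have hb0 : (0:ℝ) ≤ (r - s) ^ (H - 1/2) := Real.rpow_nonneg (by linarith) _
    simp only [hg, habs, ← haa, ← hbb]
    nlinarith
  -- evaluate ∫ g
  have e1 : (∫ r in m..t, |t - r| ^ (2*H - 1)) = (t - m) ^ (2*H) / (2*H) := by
    rw [intervalIntegral.integral_congr (g := fun r => (t - r) ^ (2*H - 1)) ?_]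
    · rw [aux_eval_sub_left hβ, sub_self, Real.zero_rpow (by linarith : 2*H - 1 + 1 ≠ 0),
        (by ring : 2*H - 1 + 1 = 2*H)]
      ring
    · intro r hr
      rw [Set.uIcc_of_le hmt] at hr
      simp only
      rw [abs_of_nonneg (by linarith [hr.2] : (0:ℝ) ≤ t - r)]
  have e2 : (∫ r in t..(1:ℝ), |t - r| ^ (2*H - 1)) = (1 - t) ^ (2*H) / (2*H) := by
    rw [intervalIntegral.integral_congr (g := fun r => (r - t) ^ (2*H - 1)) ?_]
    · rw [aux_eval_sub_right hβ, sub_self, Real.zero_rpow (by linarith : 2*H - 1 + 1 ≠ 0),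
        (by ring : 2*H - 1 + 1 = 2*H)]
      ring
    · intro r hr
      rw [Set.uIcc_of_le (by linarith : t ≤ 1)] at hr
      simp only
      rw [abs_sub_comm, abs_of_nonneg (by linarith [hr.1] : (0:ℝ) ≤ r - t)]
  have e3 : (∫ r in m..(1:ℝ), |t - r| ^ (2*H - 1))
      = (t - m) ^ (2*H) / (2*H) + (1 - t) ^ (2*H) / (2*H) := by
    rw [← intervalIntegral.integral_add_adjacent_intervals
      (aux_abs_sub_rpow_II hβ t m t) (aux_abs_sub_rpow_II hβ t t 1), e1, e2]
  have e4 : (∫ r in m..(1:ℝ), (r - s) ^ (2*H - 1))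
      = ((1 - s) ^ (2*H) - (m - s) ^ (2*H)) / (2*H) := by
    rw [aux_eval_sub_right hβ, (by ring : 2*H - 1 + 1 = 2*H)]
  have e5 : (∫ r in m..(1:ℝ), g r)
      = (t - m) ^ (2*H) / (2*H) + (1 - t) ^ (2*H) / (2*H)
        - ((1 - s) ^ (2*H) - (m - s) ^ (2*H)) / (2*H) := by
    rw [hg, intervalIntegral.integral_sub (aux_abs_sub_rpow_II hβ t m 1)
      (aux_sub_rpow_II hβ s m 1), e3, e4]
  -- final bounds
  have hb1 : (1 - t) ^ (2*H) ≤ (1 - s) ^ (2*H) :=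
    Real.rpow_le_rpow (by linarith) (by linarith) (by linarith)
  have hb2 : (t - m) ^ (2*H) ≤ (t - s) ^ (2*H) :=
    Real.rpow_le_rpow (by rw [hm]; linarith) (by rw [hm]; linarith) (by linarith)
  have hb3 : (m - s) ^ (2*H) ≤ (t - s) ^ (2*H) :=
    Real.rpow_le_rpow (by rw [hm]; linarith) (by rw [hm]; linarith) (by linarith)
  have hfinal : (∫ r in m..(1:ℝ), g r) ≤ 1/H * (t - s) ^ (2*H) := by
    rw [e5]
    have hx : (t - m) ^ (2*H) / (2*H) + (1 - t) ^ (2*H) / (2*H)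
        - ((1 - s) ^ (2*H) - (m - s) ^ (2*H)) / (2*H)
        = ((t - m) ^ (2*H) + (1 - t) ^ (2*H) - (1 - s) ^ (2*H) + (m - s) ^ (2*H)) / (2*H) := by
      ring
    rw [hx, div_le_iff₀ h2H]
    have hy : 1/H * (t - s) ^ (2*H) * (2*H) = 2 * (t - s) ^ (2*H) := by
      field_simp
    rw [hy]
    linarith
  have hsplit : (∫ r in (0:ℝ)..1,
      |t - r| ^ (H - 1/2) * (|t - r| ^ (H - 1/2) - |s - r| ^ (H - 1/2)))
      = (∫ r in (0:ℝ)..m,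
          |t - r| ^ (H - 1/2) * (|t - r| ^ (H - 1/2) - |s - r| ^ (H - 1/2)))
        + ∫ r in m..(1:ℝ),
          |t - r| ^ (H - 1/2) * (|t - r| ^ (H - 1/2) - |s - r| ^ (H - 1/2)) :=
    (intervalIntegral.integral_add_adjacent_intervals hf1 hf2).symm
  rw [hsplit]
  calc _ ≤ (0:ℝ) + ∫ r in m..(1:ℝ), g r := add_le_add hpiece1 hpiece2
    _ ≤ 1/H * (t - s) ^ (2*H) := by rw [zero_add]; exact hfinal
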